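/- Let f, f̃ : ℝ^{d_Z} → ℝ^D be C²-diffeomorphisms onto their images, let c_0, ..., c_M, c̃_0, ..., c̃_M ∈ ℝ^{d_Z} be shift vectors, and let C, C̃ ∈ ℝ^{d_Z×M} be the matrices whose columns are c_e − c_0 and c̃_e − c̃_0 for e ∈ {1, ..., M}, respectively. Suppose that for all e ∈ {0, ..., M}, f(Z + c_e) is equal in distribution to f̃(Z̃ + c̃_e), where Z ~ N(−c_0, I) and Z̃ ~ N(−c̃_0, I) are independent, and suppose rank(C̃) = d_Z or rank(C) = d_Z. Then there exists an orthogonal matrix O ∈ O(d_Z) such that f̃⁻¹ ∘ f(z) = O z for all z ∈ ℝ^{d_Z}, and C̃ = O C. -/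

import Mathlib

open MeasureTheory ProbabilityTheory

/-- The multivariate Gaussian distribution `N(m, I)` on `ℝ^d` with mean `m` and
identity covariance, realized as the shift by `m` of a product of standard Gaussians. -/
noncomputable def gaussianId (d : ℕ) (m : Fin d → ℝ) :
    MeasureTheory.Measure (Fin d → ℝ) :=
  (MeasureTheory.Measure.pi fun _ : Fin d => ProbabilityTheory.gaussianReal 0 1).map
    (fun z => m + z)

/-- `f : ℝ^n → ℝ^D` is a `C²`-diffeomorphism onto its image: it is `C²`, injective,
and has a `C²` inverse on its range. -/
def IsC2DiffeoOntoImage {n m : ℕ} (f : (Fin n → ℝ) → (Fin m → ℝ)) : Prop :=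
  ContDiff ℝ 2 f ∧ Function.Injective f ∧
    ∃ g : (Fin m → ℝ) → (Fin n → ℝ), (∀ z, g (f z) = z) ∧
      ContDiffOn ℝ 2 g (Set.range f)

/-! The map `τ = f̃⁻¹ ∘ f` (defined almost everywhere) pushes the standard Gaussian `N(0, I)` to
itself and, in every environment, `N(c_e - c_0, I)` to `N(c̃_e - c̃_0, I)`. Comparing the
Cameron–Martin densities `exp (⟪b, x⟫ - ‖b‖² / 2)` of these shifted Gaussians along `τ` gives
`⟪c̃_e - c̃_0, τ x⟫ = ⟪c_e - c_0, x⟫ + const` almost everywhere, so `τ` is a.e. affine once `C̃` has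
full rank. Comparing moment generating functions, an affine map preserving `N(0, I)` is orthogonal,
and continuity turns the almost-everywhere identities into identities. -/

open Real Matrix
open scoped ENNReal

section Pi

variable {ι : Type*} [Fintype ι] {α : ι → Type*} [∀ i, MeasurableSpace (α i)]
  {μ : ∀ i, Measure (α i)} [∀ i, IsProbabilityMeasure (μ i)]

theorem lintegral_fintype_prod_eq_prod (g : ∀ i, α i → ℝ≥0∞) (hg : ∀ i, Measurable (g i)) :
    ∫⁻ x, ∏ i, g i (x i) ∂Measure.pi μ = ∏ i, ∫⁻ t, g i t ∂μ i := by
  rw [lintegral_prod_eq_prod_lintegral_of_indepFun _ _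
    (iIndepFun_pi fun i => (hg i).aemeasurable) fun i => (hg i).comp (measurable_pi_apply i)]
  exact Finset.prod_congr rfl fun i _ => (measurePreserving_eval μ i).lintegral_comp (hg i)

theorem Measure.pi_withDensity (ρ : ∀ i, α i → ℝ≥0∞) (hρ : ∀ i, Measurable (ρ i))
    [∀ i, SigmaFinite ((μ i).withDensity (ρ i))] :
    Measure.pi (fun i => (μ i).withDensity (ρ i)) =
      (Measure.pi μ).withDensity fun x => ∏ i, ρ i (x i) := by
  refine Measure.pi_eq fun s hs => ?_
  have hind : (Set.univ.pi s).indicator (fun x => ∏ i, ρ i (x i)) =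
      fun x => ∏ i, (s i).indicator (ρ i) (x i) := by
    ext x
    classical simp [Set.indicator, Finset.prod_ite_zero]
  rw [withDensity_apply _ (MeasurableSet.univ_pi hs), ← lintegral_indicator
    (MeasurableSet.univ_pi hs), hind, lintegral_fintype_prod_eq_prod _
    fun i => (hρ i).indicator (hs i)]
  exact Finset.prod_congr rfl fun i _ => by
    rw [lintegral_indicator (hs i), withDensity_apply _ (hs i)]

end Pi

instance : Measure.IsOpenPosMeasure (gaussianReal 0 1) :=
  (gaussianReal_absolutelyContinuous' 0 one_ne_zero).isOpenPosMeasure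

theorem gaussianReal_eq_withDensity (t : ℝ) :
    gaussianReal t 1 =
      (gaussianReal 0 1).withDensity fun x => ENNReal.ofReal (exp (t * x - t ^ 2 / 2)) := by
  rw [gaussianReal_of_var_ne_zero t one_ne_zero, gaussianReal_of_var_ne_zero 0 one_ne_zero,
    ← withDensity_mul _ (measurable_gaussianPDF 0 1) (by fun_prop)]
  congr 1
  ext x
  rw [Pi.mul_apply, gaussianPDF, gaussianPDF, ← ENNReal.ofReal_mul (gaussianPDFReal_nonneg 0 1 x),
    gaussianPDFReal, gaussianPDFReal]
  simp only [NNReal.coe_one, mul_one, sub_zero]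
  rw [mul_assoc, ← exp_add]
  congr 3
  ring

section StdGaussianPi

variable {ι : Type*} [Fintype ι]

variable (ι) in
noncomputable abbrev stdGaussianPi : Measure (ι → ℝ) := Measure.pi fun _ => gaussianReal 0 1

noncomputable def gaussianShiftDensity (b x : ι → ℝ) : ℝ≥0∞ :=
  ENNReal.ofReal (exp (b ⬝ᵥ x - b ⬝ᵥ b / 2))

@[fun_prop]
theorem measurable_gaussianShiftDensity (b : ι → ℝ) : Measurable (gaussianShiftDensity b) := by
  unfold gaussianShiftDensity dotProduct
  fun_prop

theorem gaussianShiftDensity_eq_iff {b b' x x' : ι → ℝ} :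
    gaussianShiftDensity b x = gaussianShiftDensity b' x' ↔
      b ⬝ᵥ x - b ⬝ᵥ b / 2 = b' ⬝ᵥ x' - b' ⬝ᵥ b' / 2 := by
  rw [gaussianShiftDensity, gaussianShiftDensity,
    ENNReal.ofReal_eq_ofReal_iff (exp_pos _).le (exp_pos _).le, exp_eq_exp]

theorem stdGaussianPi_map_add_const (b : ι → ℝ) :
    (stdGaussianPi ι).map (· + b) = (stdGaussianPi ι).withDensity (gaussianShiftDensity b) := by
  have hmap : (stdGaussianPi ι).map (· + b) = Measure.pi fun i => gaussianReal (b i) 1 :=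
    (measurePreserving_pi _ _ fun i => ⟨measurable_add_const (b i), by
      simpa using gaussianReal_map_add_const (μ := 0) (v := 1) (b i)⟩).map_eq
  have : ∀ i, SigmaFinite ((gaussianReal 0 1).withDensity
      fun x => ENNReal.ofReal (exp (b i * x - b i ^ 2 / 2))) := fun i => by
    rw [← gaussianReal_eq_withDensity]
    infer_instance
  rw [hmap, funext fun i => gaussianReal_eq_withDensity (b i),
    Measure.pi_withDensity _ fun i => by fun_prop]
  congr 1
  ext x
  rw [← ENNReal.ofReal_prod_of_nonneg fun i _ => (exp_pos _).le, ← exp_sum, gaussianShiftDensity,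
    dotProduct, dotProduct, Finset.sum_div, ← Finset.sum_sub_distrib]
  simp only [sq]

theorem integral_exp_dotProduct_stdGaussianPi (t : ι → ℝ) :
    ∫ x, exp (t ⬝ᵥ x) ∂stdGaussianPi ι = exp (t ⬝ᵥ t / 2) := by
  simp_rw [dotProduct, exp_sum]
  rw [integral_fintype_prod_eq_prod (fun i y => exp (t i * y)), Finset.sum_div, exp_sum]
  refine Finset.prod_congr rfl fun i _ => ?_
  simpa [mgf, sq] using congrFun (mgf_id_gaussianReal (μ := 0) (v := 1)) (t i)

end StdGaussianPi

section LinearAlgebra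

variable {m n : Type*} [Fintype n] [DecidableEq n]

theorem Matrix.mul_transpose_eq_one_of_dotProduct_vecMul_self {A : Matrix n n ℝ}
    (h : ∀ t, (t ᵥ* A) ⬝ᵥ (t ᵥ* A) = t ⬝ᵥ t) : A * Aᵀ = 1 := by
  have polar : ∀ s t, (s ᵥ* A) ⬝ᵥ (t ᵥ* A) = s ⬝ᵥ t := fun s t => by
    have := h (s + t)
    simp only [add_vecMul, add_dotProduct, dotProduct_add] at this
    linarith [h s, h t, dotProduct_comm (s ᵥ* A) (t ᵥ* A), dotProduct_comm s t]
  ext i j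
  simpa [mul_apply', single_one_vecMul, row, one_apply, Pi.single_apply, eq_comm] using
    polar (Pi.single i 1) (Pi.single j 1)

theorem Matrix.exists_mul_eq_one_of_rank_eq [Fintype m] {A : Matrix n m ℝ}
    (h : A.rank = Fintype.card n) :
    ∃ B : Matrix m n ℝ, A * B = 1 := by
  refine mulVec_surjective_iff_exists_right_inverse.1 fun y => ?_
  have : LinearMap.range A.mulVecLin = ⊤ := Submodule.eq_top_of_finrank_eq
    (h.trans (Module.finrank_fintype_fun_eq_card ℝ).symm)
  exact LinearMap.range_eq_top.1 this y

theorem Matrix.eq_mulVec_add_of_transpose_mulVec_eq {R : Type*} [CommRing R] [Fintype m]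
    {A B : Matrix n m R} {P : Matrix m n R} {κ : m → R} {x y : n → R} (hP : A * P = 1)
    (h : Aᵀ *ᵥ y = Bᵀ *ᵥ x + κ) : y = (Pᵀ * Bᵀ) *ᵥ x + Pᵀ *ᵥ κ := calc
  y = (Pᵀ * Aᵀ) *ᵥ y := by rw [← transpose_mul, hP, transpose_one, one_mulVec]
  _ = Pᵀ *ᵥ (Bᵀ *ᵥ x + κ) := by rw [← mulVec_mulVec, h]
  _ = (Pᵀ * Bᵀ) *ᵥ x + Pᵀ *ᵥ κ := by rw [mulVec_add, mulVec_mulVec]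

theorem Matrix.eq_mul_of_transpose_mulVec_mulVec_eq {R : Type*} [CommRing R]
    {A B : Matrix n m R} {O : Matrix n n R} {κ : m → R} (hO : O * Oᵀ = 1)
    (h : ∀ x, Aᵀ *ᵥ (O *ᵥ x) = Bᵀ *ᵥ x + κ) : A = O * B := by
  have hκ : κ = 0 := by simpa using (h 0).symm
  have hAB : Aᵀ * O = Bᵀ := ext_of_mulVec_single fun i => by
    rw [← mulVec_mulVec, h, hκ, add_zero]
  rw [← Matrix.one_mul A, ← hO, Matrix.mul_assoc, ← transpose_transpose (Oᵀ * A),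
    transpose_mul, transpose_transpose, hAB, transpose_transpose]

end LinearAlgebra

theorem mul_transpose_eq_one_and_eq_zero_of_map_stdGaussianPi {ι : Type*} [Fintype ι]
    [DecidableEq ι] {L : Matrix ι ι ℝ} {v : ι → ℝ}
    (h : (stdGaussianPi ι).map (fun x => L *ᵥ x + v) = stdGaussianPi ι) :
    L * Lᵀ = 1 ∧ v = 0 := by
  have key : ∀ t, (t ᵥ* L) ⬝ᵥ (t ᵥ* L) / 2 + t ⬝ᵥ v = t ⬝ᵥ t / 2 := fun t => by
    have := congrArg (fun μ => ∫ x, exp (t ⬝ᵥ x) ∂μ) h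
    rw [integral_map (by fun_prop) (by fun_prop)] at this
    simp_rw [dotProduct_add, dotProduct_mulVec, exp_add] at this
    rw [integral_mul_const, integral_exp_dotProduct_stdGaussianPi,
      integral_exp_dotProduct_stdGaussianPi, ← exp_add] at this
    exact exp_injective this
  have hv : ∀ t, t ⬝ᵥ v = 0 := fun t => by
    have := key (-t)
    simp only [neg_vecMul, neg_dotProduct, dotProduct_neg, neg_neg] at this
    linarith [key t]
  refine ⟨mul_transpose_eq_one_of_dotProduct_vecMul_self fun t => ?_,
    dotProduct_self_eq_zero.1 (hv v)⟩
  linarith [key t, hv t]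

section Transport

variable {X Y : Type*} [MeasurableSpace X] [MeasurableSpace Y] {f g : X → Y} {q : Y → X}
  {μ ν : Measure X}

theorem map_withDensity_comp {τ : X → X} (hτ : Measurable τ) {ρ : X → ℝ≥0∞} (hρ : Measurable ρ) :
    (μ.withDensity (ρ ∘ τ)).map τ = (μ.map τ).withDensity ρ := by
  ext s hs
  rw [Measure.map_apply hτ hs, withDensity_apply _ hs, withDensity_apply _ (hτ hs),
    setLIntegral_map hs hρ hτ, Function.comp_def]

theorem map_leftInverse_comp_eq (hf : Measurable f) (hg : Measurable g) (hq : Measurable q)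
    (hqg : Function.LeftInverse q g) (h : μ.map f = ν.map g) : μ.map (q ∘ f) = ν := by
  rw [← Measure.map_map hq hf, h, Measure.map_map hq hg, hqg.comp_eq_id, Measure.map_id]

theorem ae_eq_comp_leftInverse_comp (hf : Measurable f) (hg : MeasurableEmbedding g)
    (hqg : Function.LeftInverse q g) (h : μ.map f = ν.map g) : f =ᵐ[μ] g ∘ q ∘ f := by
  have hrange : ∀ᵐ x ∂μ, f x ∈ Set.range g := by
    have := congrArg (· (Set.range g)ᶜ) h
    simp only [Measure.map_apply hf hg.measurableSet_range.compl,
      hg.map_apply, Set.preimage_compl, Set.preimage_range, Set.compl_univ, measure_empty] at this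
    exact this
  filter_upwards [hrange] with x ⟨y, hy⟩
  simp [← hy, hqg y]

theorem ae_eq_comp_of_map_withDensity_eq [SigmaFinite μ] (hf : MeasurableEmbedding f)
    (hg : MeasurableEmbedding g) (hq : Measurable q) (hqg : Function.LeftInverse q g)
    {ρ ρ' : X → ℝ≥0∞} (hρ : Measurable ρ) (hρ' : Measurable ρ') (h₀ : μ.map f = ν.map g)
    (h : (μ.withDensity ρ).map f = (ν.withDensity ρ').map g) : ρ =ᵐ[μ] ρ' ∘ q ∘ f := by
  have hτ : Measurable (q ∘ f) := hq.comp hf.measurable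
  have hρτ : Measurable (ρ' ∘ q ∘ f) := hρ'.comp hτ
  refine (withDensity_eq_iff_of_sigmaFinite hρ.aemeasurable hρτ.aemeasurable).1 <|
    hf.map_injective ?_
  calc (μ.withDensity ρ).map f
      = (ν.withDensity ρ').map g := h
    _ = ((μ.map (q ∘ f)).withDensity ρ').map g := by
      rw [map_leftInverse_comp_eq hf.measurable hg.measurable hq hqg h₀]
    _ = ((μ.withDensity (ρ' ∘ q ∘ f)).map (q ∘ f)).map g := by
      rw [map_withDensity_comp hτ hρ']
    _ = (μ.withDensity (ρ' ∘ q ∘ f)).map f := by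
      rw [Measure.map_map hg.measurable hτ]
      exact Measure.map_congr ((ae_eq_comp_leftInverse_comp hf.measurable hg hqg h₀).filter_mono
        (withDensity_absolutelyContinuous μ _).ae_le).symm

end Transport

theorem exists_transport_of_map_stdGaussianPi_eq {ι E Y : Type*} [Fintype ι] [Countable E]
    [MeasurableSpace Y] {f g : (ι → ℝ) → Y} (hf : MeasurableEmbedding f)
    (hg : MeasurableEmbedding g) (b b' : E → ι → ℝ)
    (h₀ : (stdGaussianPi ι).map f = (stdGaussianPi ι).map g)
    (h : ∀ e, ((stdGaussianPi ι).map (· + b e)).map f = ((stdGaussianPi ι).map (· + b' e)).map g) :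
    ∃ τ : (ι → ℝ) → ι → ℝ, (stdGaussianPi ι).map τ = stdGaussianPi ι ∧
      f =ᵐ[stdGaussianPi ι] g ∘ τ ∧
      ∀ᵐ x ∂stdGaussianPi ι, ∀ e, b' e ⬝ᵥ τ x = b e ⬝ᵥ x + (b' e ⬝ᵥ b' e - b e ⬝ᵥ b e) / 2 := by
  set q := Function.extend g id 0
  have hq : Measurable q := hg.measurable_extend measurable_id measurable_const
  have hqg : Function.LeftInverse q g := hg.injective.extend_apply _ _
  refine ⟨q ∘ f, map_leftInverse_comp_eq hf.measurable hg.measurable hq hqg h₀,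
    ae_eq_comp_leftInverse_comp hf.measurable hg hqg h₀, ae_all_iff.2 fun e => ?_⟩
  have he := h e
  rw [stdGaussianPi_map_add_const, stdGaussianPi_map_add_const] at he
  filter_upwards [ae_eq_comp_of_map_withDensity_eq hf hg hq hqg (by fun_prop) (by fun_prop) h₀ he]
    with x hx
  rw [Function.comp_apply, gaussianShiftDensity_eq_iff] at hx
  linarith

theorem map_gaussianId_neg {d : ℕ} {Y : Type*} [MeasurableSpace Y] {F : (Fin d → ℝ) → Y}
    (hF : Measurable F) (m a : Fin d → ℝ) :
    (gaussianId d (-m)).map (fun z => F (z + a)) =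
      ((stdGaussianPi (Fin d)).map (· + (a - m))).map F := by
  rw [gaussianId, Measure.map_map (by fun_prop) (by fun_prop),
    Measure.map_map hF (by fun_prop)]
  congr 1
  ext z
  simp only [Function.comp_apply]
  abel_nf

theorem identifiability_of_rank_eq {dZ D M : ℕ}
    {c ct : Fin (M + 1) → (Fin dZ → ℝ)} {C Ct : Matrix (Fin dZ) (Fin M) ℝ}
    (hC : C = Matrix.of fun j (e : Fin M) => c e.succ j - c 0 j)
    (hCt : Ct = Matrix.of fun j (e : Fin M) => ct e.succ j - ct 0 j)
    {f ftilde : (Fin dZ → ℝ) → (Fin D → ℝ)}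
    (hf : IsC2DiffeoOntoImage f) (hft : IsC2DiffeoOntoImage ftilde)
    (heq : ∀ e : Fin (M + 1),
      (gaussianId dZ (-(c 0))).map (fun z => f (z + c e)) =
        (gaussianId dZ (-(ct 0))).map (fun z => ftilde (z + ct e)))
    (hrank : Ct.rank = dZ) :
    ∃ O : Matrix (Fin dZ) (Fin dZ) ℝ,
      O * O.transpose = 1 ∧
      (∀ z : Fin dZ → ℝ, f z = ftilde (O.mulVec z)) ∧
      Ct = O * C := by
  set γ := stdGaussianPi (Fin dZ)
  have hfc : Continuous f := hf.1.continuous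
  have hftc : Continuous ftilde := hft.1.continuous
  have hmap : ∀ e, (γ.map (· + (c e - c 0))).map f = (γ.map (· + (ct e - ct 0))).map ftilde :=
    fun e => by rw [← map_gaussianId_neg hfc.measurable, ← map_gaussianId_neg hftc.measurable, heq]
  obtain ⟨τ, hτ, hfτ, hrel⟩ := exists_transport_of_map_stdGaussianPi_eq
    (hfc.measurableEmbedding hf.2.1) (hftc.measurableEmbedding hft.2.1)
    (fun e : Fin M => c e.succ - c 0) (fun e => ct e.succ - ct 0) (by simpa using hmap 0)
    fun e => hmap e.succ
  set κ : Fin M → ℝ := fun e => ((ct e.succ - ct 0) ⬝ᵥ (ct e.succ - ct 0) -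
    (c e.succ - c 0) ⬝ᵥ (c e.succ - c 0)) / 2
  have hrelM : ∀ᵐ x ∂γ, Ctᵀ *ᵥ τ x = Cᵀ *ᵥ x + κ := hrel.mono fun x hx => by
    subst hC hCt
    exact funext hx
  obtain ⟨P, hP⟩ := exists_mul_eq_one_of_rank_eq (A := Ct) (by simpa using hrank)
  set O := Pᵀ * Cᵀ
  have hτO : τ =ᵐ[γ] fun x => O *ᵥ x + Pᵀ *ᵥ κ :=
    hrelM.mono fun x => eq_mulVec_add_of_transpose_mulVec_eq hP
  obtain ⟨hO, hκ⟩ := mul_transpose_eq_one_and_eq_zero_of_map_stdGaussianPi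
    ((Measure.map_congr hτO).symm.trans hτ)
  simp only [hκ, add_zero] at hτO
  have hfO : f =ᵐ[γ] fun x => ftilde (O *ᵥ x) := hfτ.trans (hτO.fun_comp ftilde)
  have hCO : ∀ᵐ x ∂γ, Ctᵀ *ᵥ (O *ᵥ x) = Cᵀ *ᵥ x + κ := by
    filter_upwards [hrelM, hτO] with x hx hxO
    rw [← hxO, hx]
  refine ⟨O, hO, congrFun ((Continuous.ae_eq_iff_eq γ hfc (by fun_prop)).1 hfO),
    eq_mul_of_transpose_mulVec_mulVec_eq hO <|
      congrFun ((Continuous.ae_eq_iff_eq γ (by fun_prop) (by fun_prop)).1 hCO)⟩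

theorem identifiability_arbitrary_shifts_general
    (dZ D M : ℕ)
    (c ct : Fin (M + 1) → (Fin dZ → ℝ))
    (C Ct : Matrix (Fin dZ) (Fin M) ℝ)
    (hC : C = Matrix.of fun j (e : Fin M) => c e.succ j - c 0 j)
    (hCt : Ct = Matrix.of fun j (e : Fin M) => ct e.succ j - ct 0 j)
    (f ftilde : (Fin dZ → ℝ) → (Fin D → ℝ))
    (hf : IsC2DiffeoOntoImage f) (hft : IsC2DiffeoOntoImage ftilde)
    (heq : ∀ e : Fin (M + 1),
      (gaussianId dZ (-(c 0))).map (fun z => f (z + c e)) =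
        (gaussianId dZ (-(ct 0))).map (fun z => ftilde (z + ct e)))
    (hrank : Ct.rank = dZ ∨ C.rank = dZ) :
    ∃ O : Matrix (Fin dZ) (Fin dZ) ℝ,
      O * O.transpose = 1 ∧
      (∀ z : Fin dZ → ℝ, f z = ftilde (O.mulVec z)) ∧
      Ct = O * C := by
  rcases hrank with hrank | hrank
  · exact identifiability_of_rank_eq hC hCt hf hft heq hrank
  · obtain ⟨O, hO, hfO, hCO⟩ :=
      identifiability_of_rank_eq hCt hC hft hf (fun e => (heq e).symm) hrank
    have hOO : Oᵀ * O = 1 := mul_eq_one_comm.1 hO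
    refine ⟨Oᵀ, by rwa [transpose_transpose], fun z => ?_, ?_⟩
    · rw [hfO, mulVec_mulVec, hO, one_mulVec]
    · rw [hCO, ← Matrix.mul_assoc, hOO, Matrix.one_mul]

/-- **Identifiability with arbitrary (not necessarily linear-in-label) shifts.**
If two models with arbitrary latent shift vectors `c_e` resp. `c̃_e` and base
distributions `N(-c₀, I)` resp. `N(-c̃₀, I)` induce the same observed distributions in
every environment, `f, f̃` are `C²`-diffeomorphisms onto their images, and the matrix
`C̃` (resp. `C`) of relative shifts `c̃_e - c̃₀` (resp. `c_e - c₀`) has rank `d_Z`, then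
there is an orthogonal `O` with `f̃⁻¹ ∘ f = O·` (equivalently `f = f̃ ∘ O·`) and
`C̃ = O C`. -/
theorem identifiability_arbitrary_shifts
    (dZ D M : ℕ) (hdZ : 1 ≤ dZ) (hD : 1 ≤ D)
    (c ct : Fin (M + 1) → (Fin dZ → ℝ))
    (C Ct : Matrix (Fin dZ) (Fin M) ℝ)
    (hC : C = Matrix.of fun j (e : Fin M) => c e.succ j - c 0 j)
    (hCt : Ct = Matrix.of fun j (e : Fin M) => ct e.succ j - ct 0 j)
    (f ftilde : (Fin dZ → ℝ) → (Fin D → ℝ))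
    (hf : IsC2DiffeoOntoImage f) (hft : IsC2DiffeoOntoImage ftilde)
    (heq : ∀ e : Fin (M + 1),
      (gaussianId dZ (-(c 0))).map (fun z => f (z + c e)) =
        (gaussianId dZ (-(ct 0))).map (fun z => ftilde (z + ct e)))
    (hrank : Ct.rank = dZ ∨ C.rank = dZ) :
    ∃ O : Matrix (Fin dZ) (Fin dZ) ℝ,
      O * O.transpose = 1 ∧
      (∀ z : Fin dZ → ℝ, f z = ftilde (O.mulVec z)) ∧
      Ct = O * C :=
  identifiability_arbitrary_shifts_general dZ D M c ct C Ct hC hCt f ftilde hf hft heq hrank
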